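/- Let ω be the Fourier multiplier ω(k) = |k| on L²(ℝ^d), let f ∈ C_0^∞(ℝ^d) and f_t(x) = f(x/t) acting as a multiplication operator. Then i[ω, f_t] = ∇ω · ∇f_t + O_t where ∇ω is the Fourier multiplier k/|k|, and the remainder satisfies ‖O_t‖ ≤ C t^{−1} and, for any 0 < β < 1, ‖O_t 𝟙_{[|k| ≥ t^{β−1}]}‖ ≤ C t^{−1−β}, for all t ≥ 1. -/

import Mathlib

open MeasureTheory Real
open scoped RealInnerProductSpace FourierTransform ENNReal

lemma aux_cs {α : Type*} [MeasurableSpace α] (μ : Measure α)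
    (g Ψ : α → ℝ≥0∞) (hg : AEMeasurable g μ) (hΨ : AEMeasurable Ψ μ) :
    (∫⁻ p, g p * Ψ p ∂μ) ^ 2 ≤ (∫⁻ p, g p ∂μ) * ∫⁻ p, g p * Ψ p ^ 2 ∂μ := by
  have h2 : Real.HolderConjugate 2 2 := Real.HolderConjugate.two_two
  have h := ENNReal.lintegral_mul_le_Lp_mul_Lq μ h2
      (f := fun p => g p ^ (1/2 : ℝ)) (g := fun p => g p ^ (1/2 : ℝ) * Ψ p)
      (hg.pow_const _) ((hg.pow_const _).mul hΨ)
  simp only [Pi.mul_apply] at h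
  have e1 : ∀ p, (g p ^ (1/2:ℝ)) * (g p ^ (1/2:ℝ) * Ψ p) = g p * Ψ p := by
    intro p
    rw [← mul_assoc, ← ENNReal.rpow_add_of_nonneg _ _ (by norm_num) (by norm_num)]
    norm_num
  have e2 : ∀ p, (g p ^ (1/2:ℝ)) ^ (2:ℝ) = g p := by
    intro p; rw [← ENNReal.rpow_mul]; norm_num
  have e3 : ∀ p, (g p ^ (1/2:ℝ) * Ψ p) ^ (2:ℝ) = g p * Ψ p ^ 2 := by
    intro p
    rw [ENNReal.mul_rpow_of_nonneg _ _ (by norm_num : (0:ℝ) ≤ 2), ← ENNReal.rpow_mul]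
    norm_num
  simp only [e1, e2, e3] at h
  calc (∫⁻ p, g p * Ψ p ∂μ) ^ 2
      ≤ ((∫⁻ p, g p ∂μ) ^ (1/2:ℝ) * (∫⁻ p, g p * Ψ p ^ 2 ∂μ) ^ (1/2:ℝ)) ^ 2 := by
        rw [pow_two, pow_two]; exact mul_le_mul' h h
    _ = (∫⁻ p, g p ∂μ) * ∫⁻ p, g p * Ψ p ^ 2 ∂μ := by
        rw [mul_pow, ← ENNReal.rpow_natCast (_ ^ (1/2:ℝ)) 2, ← ENNReal.rpow_natCast (_ ^ (1/2:ℝ)) 2,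
          ← ENNReal.rpow_mul, ← ENNReal.rpow_mul]
        norm_num

lemma aux_schur {d : ℕ} (g Ψ : EuclideanSpace ℝ (Fin d) → ℝ≥0∞)
    (hg : Measurable g) (hΨ : Measurable Ψ) :
    ∫⁻ k, (∫⁻ p, g p * Ψ (k - p)) ^ 2 ≤ (∫⁻ p, g p) ^ 2 * ∫⁻ x, Ψ x ^ 2 := by
  have hsub : Measurable fun z : EuclideanSpace ℝ (Fin d) × EuclideanSpace ℝ (Fin d) =>
      z.1 - z.2 := measurable_fst.sub measurable_snd
  have hkey : ∀ k : EuclideanSpace ℝ (Fin d),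
      (∫⁻ p, g p * Ψ (k - p)) ^ 2 ≤ (∫⁻ p, g p) * ∫⁻ p, g p * Ψ (k - p) ^ 2 := fun k =>
    aux_cs volume g _ hg.aemeasurable
      ((hΨ.comp (measurable_const.sub measurable_id)).aemeasurable)
  have hmeas2 : Measurable fun z : EuclideanSpace ℝ (Fin d) × EuclideanSpace ℝ (Fin d) =>
      g z.2 * Ψ (z.1 - z.2) ^ 2 :=
    (hg.comp measurable_snd).mul ((hΨ.comp hsub).pow_const 2)
  calc ∫⁻ k, (∫⁻ p, g p * Ψ (k - p)) ^ 2
      ≤ ∫⁻ k, (∫⁻ p, g p) * ∫⁻ p, g p * Ψ (k - p) ^ 2 := lintegral_mono hkey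
    _ = (∫⁻ p, g p) * ∫⁻ k, ∫⁻ p, g p * Ψ (k - p) ^ 2 := by
        rw [lintegral_const_mul _ hmeas2.lintegral_prod_right']
    _ = (∫⁻ p, g p) * ∫⁻ p, ∫⁻ k, g p * Ψ (k - p) ^ 2 := by
        rw [lintegral_lintegral_swap hmeas2.aemeasurable]
    _ = (∫⁻ p, g p) * ∫⁻ p, g p * ∫⁻ x, Ψ x ^ 2 := by
        congr 1
        refine lintegral_congr fun p => ?_
        rw [lintegral_const_mul (g p) (f := fun k => Ψ (k - p) ^ 2) (by fun_prop)]
        congr 1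
        exact (measurePreserving_sub_right volume p).lintegral_comp (hΨ.pow_const 2)
    _ = (∫⁻ p, g p) ^ 2 * ∫⁻ x, Ψ x ^ 2 := by
        rw [lintegral_mul_const _ hg, pow_two, mul_assoc]

lemma aux_r1 {d : ℕ} (k p : EuclideanSpace ℝ (Fin d)) :
    |‖k‖ - ‖k - p‖ - ⟪p, ‖k‖⁻¹ • k⟫| ≤ 2 * ‖p‖ := by
  have h1 : |‖k‖ - ‖k - p‖| ≤ ‖p‖ := by
    simpa [sub_sub_cancel] using abs_norm_sub_norm_le k (k - p)
  have h2 : |⟪p, ‖k‖⁻¹ • k⟫| ≤ ‖p‖ := by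
    refine (abs_real_inner_le_norm p _).trans ?_
    have : ‖(‖k‖⁻¹ : ℝ) • k‖ ≤ 1 := by
      rw [norm_smul, Real.norm_eq_abs, abs_inv, abs_norm]
      rcases eq_or_ne k 0 with rfl | hk
      · simp
      · rw [inv_mul_cancel₀ (norm_ne_zero_iff.mpr hk)]
    calc ‖p‖ * ‖(‖k‖⁻¹ : ℝ) • k‖ ≤ ‖p‖ * 1 := by
          exact mul_le_mul_of_nonneg_left this (norm_nonneg p)
      _ = ‖p‖ := mul_one _
  calc |‖k‖ - ‖k - p‖ - ⟪p, ‖k‖⁻¹ • k⟫| ≤ |‖k‖ - ‖k - p‖| + |⟪p, ‖k‖⁻¹ • k⟫| := abs_sub _ _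
    _ ≤ ‖p‖ + ‖p‖ := add_le_add h1 h2
    _ = 2 * ‖p‖ := by ring

lemma aux_r2 {d : ℕ} (k p : EuclideanSpace ℝ (Fin d)) :
    |‖k‖ - ‖k - p‖ - ⟪p, ‖k‖⁻¹ • k⟫| * ‖k - p‖ ≤ 2 * ‖p‖ ^ 2 := by
  rcases eq_or_ne k 0 with rfl | hk
  · simp only [norm_zero, inv_zero, zero_smul, inner_zero_right, zero_sub, norm_neg, sub_zero]
    rw [abs_neg, abs_norm]
    nlinarith [norm_nonneg p]
  · set u : EuclideanSpace ℝ (Fin d) := ‖k‖⁻¹ • k with hu_def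
    set q : EuclideanSpace ℝ (Fin d) := k - p with hq_def
    have hknorm : (‖k‖ : ℝ) ≠ 0 := norm_ne_zero_iff.mpr hk
    have hu : ‖u‖ = 1 := by
      rw [hu_def, norm_smul, Real.norm_eq_abs, abs_inv, abs_norm, inv_mul_cancel₀ hknorm]
    have hku : (‖k‖ : ℝ) • u = k := by
      rw [hu_def, smul_smul, mul_inv_cancel₀ hknorm, one_smul]
    have hkin : ⟪k, u⟫ = ‖k‖ := by
      rw [hu_def, real_inner_smul_right, real_inner_self_eq_norm_sq]
      field_simp
    have hr : ‖k‖ - ‖q‖ - ⟪p, u⟫ = ⟪q, u⟫ - ‖q‖ := by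
      rw [hq_def, inner_sub_left, hkin]; ring
    have hCS : ⟪q, u⟫ ≤ ‖q‖ := by
      have := real_inner_le_norm q u
      rwa [hu, mul_one] at this
    have key : 2 * (‖q‖ * (‖q‖ - ⟪q, u⟫)) = ‖q - ‖q‖ • u‖ ^ 2 := by
      have hin : ⟪q, ‖q‖ • u⟫ = ‖q‖ * ⟪q, u⟫ := real_inner_smul_right q u ‖q‖
      rw [norm_sub_sq_real, hin, norm_smul, Real.norm_eq_abs, abs_norm, hu]
      ring
    have hb : ‖q - ‖q‖ • u‖ ≤ 2 * ‖p‖ := by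
      have hdiff : q - ‖q‖ • u = -p + (‖k‖ - ‖q‖) • u := by
        rw [sub_smul, hku, hq_def]; abel
      rw [hdiff]
      calc ‖-p + (‖k‖ - ‖q‖) • u‖ ≤ ‖-p‖ + ‖(‖k‖ - ‖q‖) • u‖ := norm_add_le _ _
        _ = ‖p‖ + |‖k‖ - ‖q‖| := by rw [norm_neg, norm_smul, Real.norm_eq_abs, hu, mul_one]
        _ ≤ ‖p‖ + ‖p‖ := by
            have : |‖k‖ - ‖q‖| ≤ ‖k - q‖ := abs_norm_sub_norm_le k q
            rw [hq_def] at this ⊢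
            simpa [sub_sub_cancel] using this
        _ = 2 * ‖p‖ := by ring
    have habs : |‖k‖ - ‖q‖ - ⟪p, u⟫| = ‖q‖ - ⟪q, u⟫ := by
      rw [hr, abs_sub_comm, abs_of_nonneg (by linarith)]
    rw [habs]
    have h2 : ‖q - ‖q‖ • u‖ ^ 2 ≤ (2 * ‖p‖) ^ 2 := by
      exact pow_le_pow_left₀ (norm_nonneg _) hb 2
    nlinarith [norm_nonneg q]

lemma aux_scale {d : ℕ} (W : EuclideanSpace ℝ (Fin d) → ℝ≥0∞) (hW : Measurable W)
    {t : ℝ} (ht : 0 < t) :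
    ∫⁻ p, W (t • p) = ENNReal.ofReal ((t ^ d)⁻¹) * ∫⁻ q, W q := by
  have h := MeasureTheory.Measure.map_addHaar_smul (volume : Measure (EuclideanSpace ℝ (Fin d)))
    (r := t) ht.ne'
  rw [← lintegral_map hW (measurable_const_smul t), h, lintegral_smul_measure,
    finrank_euclideanSpace_fin, abs_of_nonneg (by positivity), smul_eq_mul]

noncomputable def mkSchwartz {d : ℕ} (f : EuclideanSpace ℝ (Fin d) → ℂ)
    (hf : ContDiff ℝ (⊤ : ℕ∞) f) (hsupp : HasCompactSupport f) : SchwartzMap (EuclideanSpace ℝ (Fin d)) ℂ where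
  toFun := f
  smooth' := hf.of_le (by simp)
  decay' := by
    intro kk n
    have hcont : Continuous fun x : EuclideanSpace ℝ (Fin d) =>
        ‖x‖ ^ kk * ‖iteratedFDeriv ℝ n f x‖ :=
      (continuous_norm.pow kk).mul (hf.continuous_iteratedFDeriv (by exact_mod_cast le_top)).norm
    have hcs : HasCompactSupport fun x : EuclideanSpace ℝ (Fin d) =>
        ‖x‖ ^ kk * ‖iteratedFDeriv ℝ n f x‖ :=
      ((hsupp.iteratedFDeriv n).norm).mul_left
    obtain ⟨C, hC⟩ := hcont.bounded_above_of_compact_support hcs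
    refine ⟨C, fun x => ?_⟩
    have := hC x
    rwa [Real.norm_of_nonneg (by positivity)] at this


lemma mkSchwartz_coe {d : ℕ} (f : EuclideanSpace ℝ (Fin d) → ℂ)
    (hf : ContDiff ℝ (⊤ : ℕ∞) f) (hsupp : HasCompactSupport f) : ⇑(mkSchwartz f hf hsupp) = f := rfl

/-- Core Schur-test bound, converted to real integrals. -/
lemma aux_core {d : ℕ} (K : EuclideanSpace ℝ (Fin d) → EuclideanSpace ℝ (Fin d) → ℂ)
    (hK : Measurable (Function.uncurry K))
    (φ : EuclideanSpace ℝ (Fin d) → ℂ) (hφ : AEStronglyMeasurable φ volume)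
    (hφ2 : Integrable (fun x => ‖φ x‖ ^ 2))
    (g : EuclideanSpace ℝ (Fin d) → ℝ) (hg0 : ∀ p, 0 ≤ g p) (hgm : Measurable g)
    (hbound : ∀ k p, ‖K k p * φ (k - p)‖ ≤ g p * ‖φ (k - p)‖)
    (c : ℝ) (hc : 0 ≤ c) (hIg : ∫⁻ p, ENNReal.ofReal (g p) ≤ ENNReal.ofReal c) :
    ∫ k, ‖Complex.I * ∫ p, K k p * φ (k - p)‖ ^ 2 ≤ c ^ 2 * ∫ k, ‖φ k‖ ^ 2 := by
  classical
  set ψ := hφ.mk φ with hψ_def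
  have hψm : StronglyMeasurable ψ := hφ.stronglyMeasurable_mk
  have hφψ : φ =ᵐ[volume] ψ := hφ.ae_eq_mk
  set G : EuclideanSpace ℝ (Fin d) → ℝ≥0∞ := fun p => ENNReal.ofReal (g p) with hG_def
  set Ψ : EuclideanSpace ℝ (Fin d) → ℝ≥0∞ := fun x => (‖ψ x‖₊ : ℝ≥0∞) with hΨ_def
  have hGm : Measurable G := hgm.ennreal_ofReal
  have hΨm : Measurable Ψ := hψm.measurable.nnnorm.coe_nnreal_ennreal
  -- the φ and ψ versions agree
  have hcomp : ∀ k : EuclideanSpace ℝ (Fin d),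
      (fun p => φ (k - p)) =ᵐ[volume] fun p => ψ (k - p) := fun k =>
    (Measure.measurePreserving_sub_left volume k).quasiMeasurePreserving.ae_eq_comp hφψ
  have hOeq : ∀ k, ∫ p, K k p * φ (k - p) = ∫ p, K k p * ψ (k - p) := fun k =>
    integral_congr_ae ((hcomp k).mono fun p hp => by dsimp only at hp ⊢; rw [hp])
  -- measurability of the output
  have hT : StronglyMeasurable fun k => Complex.I * ∫ p, K k p * ψ (k - p) := by
    refine stronglyMeasurable_const.mul ?_
    have : StronglyMeasurable fun z : EuclideanSpace ℝ (Fin d) × EuclideanSpace ℝ (Fin d) =>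
        K z.1 z.2 * ψ (z.1 - z.2) :=
      (hK.mul (hψm.measurable.comp (measurable_fst.sub measurable_snd))).stronglyMeasurable
    exact this.integral_prod_right'
  have hTm : AEStronglyMeasurable (fun k => Complex.I * ∫ p, K k p * φ (k - p)) volume := by
    have : (fun k => Complex.I * ∫ p, K k p * φ (k - p))
        = fun k => Complex.I * ∫ p, K k p * ψ (k - p) := funext fun k => by rw [hOeq k]
    rw [this]
    exact hT.aestronglyMeasurable
  -- pointwise bound
  have hpt : ∀ k, (‖Complex.I * ∫ p, K k p * φ (k - p)‖₊ : ℝ≥0∞) ≤ ∫⁻ p, G p * Ψ (k - p) := by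
    intro k
    rw [nnnorm_mul, Complex.nnnorm_I, one_mul]
    calc (‖∫ p, K k p * φ (k - p)‖₊ : ℝ≥0∞)
        ≤ ∫⁻ p, ‖K k p * φ (k - p)‖₊ := enorm_integral_le_lintegral_enorm _
      _ ≤ ∫⁻ p, G p * (‖φ (k - p)‖₊ : ℝ≥0∞) := by
          refine lintegral_mono fun p => ?_
          rw [← enorm_eq_nnnorm, ← enorm_eq_nnnorm, ← ofReal_norm, ← ofReal_norm, hG_def,
            ← ENNReal.ofReal_mul (hg0 p)]
          exact ENNReal.ofReal_le_ofReal (hbound k p)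
      _ = ∫⁻ p, G p * Ψ (k - p) := by
          refine lintegral_congr_ae (((hcomp k).mono fun p hp => ?_))
          rw [hΨ_def]; simp only [hp]
  -- the main lintegral chain
  have main : ∫⁻ k, (‖Complex.I * ∫ p, K k p * φ (k - p)‖₊ : ℝ≥0∞) ^ 2
      ≤ ENNReal.ofReal c ^ 2 * ∫⁻ x, Ψ x ^ 2 := by
    calc ∫⁻ k, (‖Complex.I * ∫ p, K k p * φ (k - p)‖₊ : ℝ≥0∞) ^ 2
        ≤ ∫⁻ k, (∫⁻ p, G p * Ψ (k - p)) ^ 2 := by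
          refine lintegral_mono fun k => ?_
          rw [pow_two, pow_two]; exact mul_le_mul' (hpt k) (hpt k)
      _ ≤ (∫⁻ p, G p) ^ 2 * ∫⁻ x, Ψ x ^ 2 := aux_schur G Ψ hGm hΨm
      _ ≤ ENNReal.ofReal c ^ 2 * ∫⁻ x, Ψ x ^ 2 := by
          gcongr
  -- identify ∫⁻ Ψ² with the real integral of ‖φ‖²
  have hN : ∫⁻ x, Ψ x ^ 2 = ENNReal.ofReal (∫ k, ‖φ k‖ ^ 2) := by
    rw [MeasureTheory.ofReal_integral_eq_lintegral_ofReal hφ2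
      (Filter.Eventually.of_forall fun x => by positivity)]
    refine lintegral_congr_ae (hφψ.mono fun x hx => ?_)
    rw [hΨ_def]
    simp only [← hx, ENNReal.ofReal_pow (norm_nonneg _), ofReal_norm, enorm_eq_nnnorm]
  have hfin : ENNReal.ofReal c ^ 2 * ∫⁻ x, Ψ x ^ 2 ≠ ⊤ := by
    rw [hN]
    exact ENNReal.mul_ne_top (by simp [ENNReal.pow_ne_top, ENNReal.ofReal_ne_top])
      ENNReal.ofReal_ne_top
  -- convert to real integrals
  have hlhs : ∫ k, ‖Complex.I * ∫ p, K k p * φ (k - p)‖ ^ 2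
      = (∫⁻ k, (‖Complex.I * ∫ p, K k p * φ (k - p)‖₊ : ℝ≥0∞) ^ 2).toReal := by
    rw [integral_eq_lintegral_of_nonneg_ae (Filter.Eventually.of_forall fun k => by positivity)
      ((hTm.norm.aemeasurable.pow_const 2).aestronglyMeasurable)]
    congr 1
    refine lintegral_congr fun k => ?_
    rw [ENNReal.ofReal_pow (norm_nonneg _), ofReal_norm, enorm_eq_nnnorm]
  rw [hlhs]
  calc (∫⁻ k, (‖Complex.I * ∫ p, K k p * φ (k - p)‖₊ : ℝ≥0∞) ^ 2).toReal
      ≤ (ENNReal.ofReal c ^ 2 * ∫⁻ x, Ψ x ^ 2).toReal := ENNReal.toReal_mono hfin main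
    _ = c ^ 2 * ∫ k, ‖φ k‖ ^ 2 := by
        rw [hN, ENNReal.toReal_mul, ENNReal.toReal_pow, ENNReal.toReal_ofReal hc,
          ENNReal.toReal_ofReal (integral_nonneg fun k => by positivity)]

set_option maxHeartbeats 2000000 in
/-- Let `ω` be the Fourier multiplier `ω(k) = |k|` on `L²(ℝ^d)`, let
`f ∈ C_0^∞(ℝ^d)` and `f_t(x) = f(x/t)`.  Then `i[ω, f_t] = ∇ω·∇f_t + O_t`, where on the
Fourier side the remainder `O_t` is the integral operator
`(O_t φ)(k) = i ∫ f̂_t(p) (|k| - |k-p| - p·k/|k|) φ(k-p) dp` with `f̂_t(p) = t^d f̂(tp)`,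
and it satisfies `‖O_t‖ ≤ C t⁻¹` and, for `0 < β < 1`, `‖O_t 𝟙_{[|k| ≥ t^{β-1}]}‖ ≤ C t^{-1-β}`,
for all `t ≥ 1`. -/
theorem stmt5 (d : ℕ) (f : EuclideanSpace ℝ (Fin d) → ℂ)
    (hf : ContDiff ℝ (⊤ : ℕ∞) f) (hsupp : HasCompactSupport f)
    (F : EuclideanSpace ℝ (Fin d) → ℂ) (hF : F = 𝓕 f)
    (β : ℝ) (hβ0 : 0 < β) (hβ1 : β < 1)
    -- `Ot t φ` is the remainder operator, written on the Fourier side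
    (Ot : ℝ → (EuclideanSpace ℝ (Fin d) → ℂ) → EuclideanSpace ℝ (Fin d) → ℂ)
    (hOt : ∀ (t : ℝ) (φ : EuclideanSpace ℝ (Fin d) → ℂ) (k : EuclideanSpace ℝ (Fin d)),
      Ot t φ k = Complex.I * ∫ p, ((t : ℂ) ^ d * F (t • p))
        * ((‖k‖ - ‖k - p‖ - ⟪p, ‖k‖⁻¹ • k⟫ : ℝ) : ℂ) * φ (k - p)) :
    ∃ C : ℝ, 0 < C ∧ ∀ t : ℝ, 1 ≤ t →
      ∀ φ : EuclideanSpace ℝ (Fin d) → ℂ, MemLp φ 2 volume →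
        ((∫ k, ‖Ot t φ k‖ ^ 2) ≤ (C * t⁻¹) ^ 2 * ∫ k, ‖φ k‖ ^ 2) ∧
        ((∀ k : EuclideanSpace ℝ (Fin d), ‖k‖ < t ^ (β - 1) → φ k = 0) →
          (∫ k, ‖Ot t φ k‖ ^ 2) ≤ (C * t ^ (-(1 + β))) ^ 2 * ∫ k, ‖φ k‖ ^ 2) := by
  classical
  -- Fourier transform is Schwartz
  set fS := mkSchwartz f hf hsupp with hfS
  set FS := SchwartzMap.fourierTransformCLM ℂ fS with hFS
  have hFSF : ⇑FS = F := by
    rw [hF, hFS, SchwartzMap.fourierTransformCLM_apply, SchwartzMap.fourier_coe, hfS, mkSchwartz_coe]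
  have hFcont : Continuous F := hFSF ▸ FS.continuous
  have hFmeas : Measurable F := hFcont.measurable
  have hInt : ∀ n : ℕ, Integrable (fun q : EuclideanSpace ℝ (Fin d) => ‖F q‖ * ‖q‖ ^ n) := by
    intro n
    have := FS.integrable_pow_mul volume n
    rw [hFSF] at this
    exact this.congr (Filter.Eventually.of_forall fun q => by ring)
  set I1 : ℝ := ∫ q : EuclideanSpace ℝ (Fin d), ‖F q‖ * ‖q‖ ^ 1 with hI1
  set I2 : ℝ := ∫ q : EuclideanSpace ℝ (Fin d), ‖F q‖ * ‖q‖ ^ 2 with hI2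
  have hI1nn : 0 ≤ I1 := integral_nonneg fun q => by positivity
  have hI2nn : 0 ≤ I2 := integral_nonneg fun q => by positivity
  -- lintegral identification
  have hLn : ∀ n : ℕ, ∫⁻ q : EuclideanSpace ℝ (Fin d), ENNReal.ofReal (‖F q‖ * ‖q‖ ^ n)
      = ENNReal.ofReal (∫ q : EuclideanSpace ℝ (Fin d), ‖F q‖ * ‖q‖ ^ n) := fun n =>
    (MeasureTheory.ofReal_integral_eq_lintegral_ofReal (hInt n)
      (Filter.Eventually.of_forall fun q => by positivity)).symm
  have hWmeas : ∀ n : ℕ, Measurable fun q : EuclideanSpace ℝ (Fin d) =>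
      ENNReal.ofReal (‖F q‖ * ‖q‖ ^ n) :=
    fun n => (hFmeas.norm.mul (measurable_norm.pow_const n)).ennreal_ofReal
  refine ⟨2 * I1 + 2 * I2 + 1, by positivity, fun t ht φ hφmem => ?_⟩
  set C : ℝ := 2 * I1 + 2 * I2 + 1 with hC
  have ht0 : (0:ℝ) < t := lt_of_lt_of_le one_pos ht
  have htne : (t:ℝ) ≠ 0 := ht0.ne'
  have hφ2 : Integrable (fun x => ‖φ x‖ ^ 2) := by
    have h := hφmem.integrable_norm_rpow (by norm_num) (by norm_num)
    have h2 : ((2:ℝ≥0∞)).toReal = (2:ℝ) := by norm_num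
    rw [h2] at h
    exact h.congr (Filter.Eventually.of_forall fun x => by
      show ‖φ x‖ ^ (2:ℝ) = ‖φ x‖ ^ (2:ℕ)
      rw [← Real.rpow_natCast ‖φ x‖ 2]; norm_num)
  -- the scaled integral computation
  have hscaled : ∀ n : ℕ, ∀ a : ℝ, 0 ≤ a →
      ∫⁻ p : EuclideanSpace ℝ (Fin d), ENNReal.ofReal
        (a * (t ^ d * ‖F (t • p)‖) * ‖p‖ ^ n)
      = ENNReal.ofReal (a * (t ^ n)⁻¹ * ∫ q : EuclideanSpace ℝ (Fin d), ‖F q‖ * ‖q‖ ^ n) := by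
    intro n a ha
    have hpt : ∀ p : EuclideanSpace ℝ (Fin d),
        ENNReal.ofReal (a * (t ^ d * ‖F (t • p)‖) * ‖p‖ ^ n)
        = ENNReal.ofReal (a * t ^ d * (t ^ n)⁻¹)
          * ENNReal.ofReal (‖F (t • p)‖ * ‖t • p‖ ^ n) := by
      intro p
      rw [← ENNReal.ofReal_mul (by positivity)]
      congr 1
      have hns : ‖t • p‖ = t * ‖p‖ := by
        rw [norm_smul, Real.norm_eq_abs, abs_of_pos ht0]
      rw [hns, mul_pow]
      field_simp
    calc ∫⁻ p : EuclideanSpace ℝ (Fin d), ENNReal.ofReal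
          (a * (t ^ d * ‖F (t • p)‖) * ‖p‖ ^ n)
        = ∫⁻ p : EuclideanSpace ℝ (Fin d), ENNReal.ofReal (a * t ^ d * (t ^ n)⁻¹)
            * ENNReal.ofReal (‖F (t • p)‖ * ‖t • p‖ ^ n) := lintegral_congr hpt
      _ = ENNReal.ofReal (a * t ^ d * (t ^ n)⁻¹)
            * ∫⁻ p : EuclideanSpace ℝ (Fin d), ENNReal.ofReal (‖F (t • p)‖ * ‖t • p‖ ^ n) := by
          rw [lintegral_const_mul' _ _ ENNReal.ofReal_ne_top]
      _ = ENNReal.ofReal (a * t ^ d * (t ^ n)⁻¹) * (ENNReal.ofReal ((t ^ d)⁻¹)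
            * ∫⁻ q : EuclideanSpace ℝ (Fin d), ENNReal.ofReal (‖F q‖ * ‖q‖ ^ n)) := by
          rw [aux_scale _ (hWmeas n) ht0]
      _ = ENNReal.ofReal (a * (t ^ n)⁻¹ * ∫ q : EuclideanSpace ℝ (Fin d), ‖F q‖ * ‖q‖ ^ n) := by
          rw [hLn n, ← ENNReal.ofReal_mul (by positivity), ← ENNReal.ofReal_mul (by positivity)]
          congr 1
          field_simp
  -- measurability of the kernel
  have hKm : Measurable (Function.uncurry fun (k p : EuclideanSpace ℝ (Fin d)) =>
      ((t : ℂ) ^ d * F (t • p)) * ((‖k‖ - ‖k - p‖ - ⟪p, ‖k‖⁻¹ • k⟫ : ℝ) : ℂ)) := by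
    apply Measurable.mul
    · exact measurable_const.mul (hFmeas.comp (measurable_snd.const_smul t))
    · apply Complex.measurable_ofReal.comp
      apply Measurable.sub
      · exact (measurable_fst.norm).sub (measurable_fst.sub measurable_snd).norm
      · exact Measurable.inner (𝕜 := ℝ) measurable_snd
          ((measurable_fst.norm.inv).smul measurable_fst)
  have hCpos : (0:ℝ) < C := by rw [hC]; positivity
  have hC1 : 2 * I1 ≤ C := by rw [hC]; linarith
  have hC2 : 2 * I2 ≤ C := by rw [hC]; linarith
  constructor
  · -- first bound
    have hbound1 : ∀ k p : EuclideanSpace ℝ (Fin d),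
        ‖((t : ℂ) ^ d * F (t • p)) * ((‖k‖ - ‖k - p‖ - ⟪p, ‖k‖⁻¹ • k⟫ : ℝ) : ℂ) * φ (k - p)‖
          ≤ (2 * (t ^ d * ‖F (t • p)‖) * ‖p‖ ^ 1) * ‖φ (k - p)‖ := by
      intro k p
      calc ‖((t : ℂ) ^ d * F (t • p)) * ((‖k‖ - ‖k - p‖ - ⟪p, ‖k‖⁻¹ • k⟫ : ℝ) : ℂ) * φ (k - p)‖
          = t ^ d * ‖F (t • p)‖ * |‖k‖ - ‖k - p‖ - ⟪p, ‖k‖⁻¹ • k⟫| * ‖φ (k - p)‖ := by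
            rw [norm_mul, norm_mul, norm_mul, norm_pow, Complex.norm_real, Complex.norm_real,
              Real.norm_eq_abs, Real.norm_eq_abs, abs_of_pos ht0]
        _ ≤ t ^ d * ‖F (t • p)‖ * (2 * ‖p‖) * ‖φ (k - p)‖ := by
            have h := aux_r1 k p
            gcongr
        _ = (2 * (t ^ d * ‖F (t • p)‖) * ‖p‖ ^ 1) * ‖φ (k - p)‖ := by ring
    have hgm1 : Measurable fun p : EuclideanSpace ℝ (Fin d) =>
        2 * (t ^ d * ‖F (t • p)‖) * ‖p‖ ^ 1 :=
      (measurable_const.mul (measurable_const.mul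
        (hFmeas.comp (measurable_const_smul t)).norm)).mul (measurable_norm.pow_const 1)
    have hIg1 : ∫⁻ p : EuclideanSpace ℝ (Fin d),
        ENNReal.ofReal (2 * (t ^ d * ‖F (t • p)‖) * ‖p‖ ^ 1) ≤ ENNReal.ofReal (C * t⁻¹) := by
      rw [hscaled 1 2 (by norm_num)]
      apply ENNReal.ofReal_le_ofReal
      rw [← hI1, pow_one]
      have h1 : (0:ℝ) ≤ t⁻¹ := inv_nonneg.mpr ht0.le
      nlinarith [mul_le_mul_of_nonneg_right hC1 h1]
    have := aux_core (fun k p => ((t : ℂ) ^ d * F (t • p))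
        * ((‖k‖ - ‖k - p‖ - ⟪p, ‖k‖⁻¹ • k⟫ : ℝ) : ℂ)) hKm φ hφmem.1 hφ2
        (fun p => 2 * (t ^ d * ‖F (t • p)‖) * ‖p‖ ^ 1) (fun p => by positivity) hgm1
        hbound1 (C * t⁻¹) (by positivity) hIg1
    simp_rw [hOt t φ]
    exact this
  · -- second bound
    intro hφs
    have hbound2 : ∀ k p : EuclideanSpace ℝ (Fin d),
        ‖((t : ℂ) ^ d * F (t • p)) * ((‖k‖ - ‖k - p‖ - ⟪p, ‖k‖⁻¹ • k⟫ : ℝ) : ℂ) * φ (k - p)‖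
          ≤ ((2 * t ^ (1 - β)) * (t ^ d * ‖F (t • p)‖) * ‖p‖ ^ 2) * ‖φ (k - p)‖ := by
      intro k p
      by_cases h0 : φ (k - p) = 0
      · simp [h0]
      · have hk : t ^ (β - 1) ≤ ‖k - p‖ := not_lt.mp fun hlt => h0 (hφs _ hlt)
        have htβ : (0:ℝ) < t ^ (β - 1) := Real.rpow_pos_of_pos ht0 _
        have hq0 : (0:ℝ) < ‖k - p‖ := htβ.trans_le hk
        have h1 : (1:ℝ) ≤ t ^ (1 - β) * ‖k - p‖ := by
          have he : t ^ (1 - β) * t ^ (β - 1) = 1 := by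
            rw [← Real.rpow_add ht0]; norm_num
          calc (1:ℝ) = t ^ (1 - β) * t ^ (β - 1) := he.symm
            _ ≤ t ^ (1 - β) * ‖k - p‖ := by
                have h2 : (0:ℝ) ≤ t ^ (1 - β) := Real.rpow_nonneg ht0.le _
                exact mul_le_mul_of_nonneg_left hk h2
        have hr2 := aux_r2 k p
        have hrb : |‖k‖ - ‖k - p‖ - ⟪p, ‖k‖⁻¹ • k⟫| ≤ 2 * t ^ (1 - β) * ‖p‖ ^ 2 := by
          have hτnn : (0:ℝ) ≤ t ^ (1 - β) := Real.rpow_nonneg ht0.le _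
          calc |‖k‖ - ‖k - p‖ - ⟪p, ‖k‖⁻¹ • k⟫|
              = |‖k‖ - ‖k - p‖ - ⟪p, ‖k‖⁻¹ • k⟫| * 1 := (mul_one _).symm
            _ ≤ |‖k‖ - ‖k - p‖ - ⟪p, ‖k‖⁻¹ • k⟫| * (t ^ (1 - β) * ‖k - p‖) :=
                mul_le_mul_of_nonneg_left h1 (abs_nonneg _)
            _ = t ^ (1 - β) * (|‖k‖ - ‖k - p‖ - ⟪p, ‖k‖⁻¹ • k⟫| * ‖k - p‖) := by ring
            _ ≤ t ^ (1 - β) * (2 * ‖p‖ ^ 2) := mul_le_mul_of_nonneg_left hr2 hτnn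
            _ = 2 * t ^ (1 - β) * ‖p‖ ^ 2 := by ring
        calc ‖((t : ℂ) ^ d * F (t • p)) * ((‖k‖ - ‖k - p‖ - ⟪p, ‖k‖⁻¹ • k⟫ : ℝ) : ℂ) * φ (k - p)‖
            = t ^ d * ‖F (t • p)‖ * |‖k‖ - ‖k - p‖ - ⟪p, ‖k‖⁻¹ • k⟫| * ‖φ (k - p)‖ := by
              rw [norm_mul, norm_mul, norm_mul, norm_pow, Complex.norm_real, Complex.norm_real,
                Real.norm_eq_abs, Real.norm_eq_abs, abs_of_pos ht0]
          _ ≤ t ^ d * ‖F (t • p)‖ * (2 * t ^ (1 - β) * ‖p‖ ^ 2) * ‖φ (k - p)‖ := by gcongr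
          _ = ((2 * t ^ (1 - β)) * (t ^ d * ‖F (t • p)‖) * ‖p‖ ^ 2) * ‖φ (k - p)‖ := by ring
    have hgm2 : Measurable fun p : EuclideanSpace ℝ (Fin d) =>
        (2 * t ^ (1 - β)) * (t ^ d * ‖F (t • p)‖) * ‖p‖ ^ 2 :=
      (measurable_const.mul (measurable_const.mul
        (hFmeas.comp (measurable_const_smul t)).norm)).mul (measurable_norm.pow_const 2)
    have hIg2 : ∫⁻ p : EuclideanSpace ℝ (Fin d),
        ENNReal.ofReal ((2 * t ^ (1 - β)) * (t ^ d * ‖F (t • p)‖) * ‖p‖ ^ 2)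
        ≤ ENNReal.ofReal (C * t ^ (-(1 + β))) := by
      rw [hscaled 2 (2 * t ^ (1 - β)) (by positivity)]
      apply ENNReal.ofReal_le_ofReal
      rw [← hI2]
      have hexp : t ^ (1 - β) * ((t : ℝ) ^ (2:ℕ))⁻¹ = t ^ (-(1 + β)) := by
        rw [← Real.rpow_natCast t 2, ← Real.rpow_neg ht0.le, ← Real.rpow_add ht0]
        congr 1
        ring
      have hrpnn : (0:ℝ) ≤ t ^ (-(1 + β)) := Real.rpow_nonneg ht0.le _
      calc 2 * t ^ (1 - β) * (t ^ 2)⁻¹ * I2 = (2 * I2) * (t ^ (1 - β) * ((t : ℝ) ^ (2:ℕ))⁻¹) := by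
            ring
        _ = (2 * I2) * t ^ (-(1 + β)) := by rw [hexp]
        _ ≤ C * t ^ (-(1 + β)) := mul_le_mul_of_nonneg_right hC2 hrpnn
    have := aux_core (fun k p => ((t : ℂ) ^ d * F (t • p))
        * ((‖k‖ - ‖k - p‖ - ⟪p, ‖k‖⁻¹ • k⟫ : ℝ) : ℂ)) hKm φ hφmem.1 hφ2
        (fun p => (2 * t ^ (1 - β)) * (t ^ d * ‖F (t • p)‖) * ‖p‖ ^ 2)
        (fun p => by positivity) hgm2 hbound2 (C * t ^ (-(1 + β)))
        (by positivity) hIg2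
    simp_rw [hOt t φ]
    exact this
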